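/- Let Φ ∈ M_p(C_0) be a point measure and K ⊆ T closed, and let η = max(Φ). The K-extremal point measure Φ_K^+ (the sum of δ_f over atoms f of Φ that are not K-sub-extremal) is the unique sub-point measure Φ̃ of Φ such that Φ̃ ∈ C_K^+ and Φ − Φ̃ ∈ C_K^-(max(Φ̃)). That is: (a) every atom of Φ̃ attains max(Φ̃) at some point of K; (b) every atom g of Φ − Φ̃ satisfies g <_K max(Φ̃); and Φ_K^+ is the only sub-point measure of Φ with these two properties. -/

import Mathlib

/-! `max(Φ)` is a pointwise supremum of continuous functions, hence lower semicontinuous, so the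
set of `K`-extremal functions is closed (a projection along the compact factor `K`) and `Φ_K^+` is
a genuine restriction of `Φ`. As only finitely many atoms exceed any positive level, `max(Φ)(t)` is
attained by an atom, which is then `K`-extremal; thus `max(Φ_K^+) = max(Φ)` on `K`, which gives
(a) and (b). Conversely, for any decomposition `Φ = Φ̃ + Ψ` with (a) and (b), condition (b) forces
`max(Φ̃) = max(Φ)` on `K`, so the atoms of `Φ̃` are exactly the `K`-extremal atoms of `Φ`. -/

open MeasureTheory Set ENNReal

noncomputable section

/-- The set of atoms of a point measure. -/
def atomsOf {α : Type*} [MeasurableSpace α] (M : Measure α) : Set α := {f | M {f} ≠ 0}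

/-- Pointwise maximum function `max(M)(t) = max {f t : f atom of M}`. -/
def maxM {T : Type*} [TopologicalSpace T] [MeasurableSpace C(T, ℝ)]
    (M : Measure C(T, ℝ)) (t : T) : ℝ :=
  sSup ((fun f : C(T, ℝ) => f t) '' atomsOf M)

/-- `M` belongs to `M_p(C_0)`: a point measure on nonnegative nonzero continuous
functions, with finitely many atoms (with multiplicity) of norm `> ε` for every `ε > 0`. -/
def IsMp {T : Type*} [MetricSpace T] [CompactSpace T] [MeasurableSpace C(T, ℝ)]
    (M : Measure C(T, ℝ)) : Prop :=
  ∃ (c : ℕ → ℕ) (φ : ℕ → C(T, ℝ)),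
    M = Measure.sum (fun n => (c n : ℝ≥0∞) • Measure.dirac (φ n)) ∧
    (∀ n, c n ≠ 0 → 0 ≤ φ n ∧ φ n ≠ 0) ∧
    (∀ ε : ℝ, 0 < ε → {n | c n ≠ 0 ∧ ε < ‖φ n‖}.Finite)

/-- `Φ` is a Poisson random measure on `α` with intensity `μ`, under `P`. -/
def IsPoissonPM {Ω : Type*} [MeasurableSpace Ω] {α : Type*} [MeasurableSpace α]
    (P : Measure Ω) (Φ : Ω → Measure α) (μ : Measure α) : Prop :=
  (∀ A : Set α, MeasurableSet A → Measurable fun ω => Φ ω A) ∧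
  (∀ A : Set α, MeasurableSet A → μ A ≠ ⊤ → ∀ n : ℕ,
      P {ω | Φ ω A = n} =
        ENNReal.ofReal (Real.exp (-(μ A).toReal) * (μ A).toReal ^ n / n.factorial)) ∧
  ∀ (m : ℕ) (A : Fin m → Set α), (∀ i, MeasurableSet (A i)) →
      Pairwise (Function.onFun Disjoint A) →
      ProbabilityTheory.iIndepFun (fun i ω => Φ ω (A i)) P

/-- `exp(-x)` for extended nonnegative `x`. -/
def Eexp (x : ℝ≥0∞) : ℝ≥0∞ :=
  if x = ⊤ then 0 else ENNReal.ofReal (Real.exp (-x.toReal))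

section PointMeasure

variable {α : Type*} [MeasurableSpace α]

lemma atomsOf_add (μ ν : Measure α) : atomsOf (μ + ν) = atomsOf μ ∪ atomsOf ν := by
  ext f
  simp only [atomsOf, mem_ofPred_eq, mem_union, Measure.add_apply, ne_eq, add_eq_zero,
    not_and_or]

variable [MeasurableSingletonClass α]

lemma atomsOf_restrict (μ : Measure α) (s : Set α) : atomsOf (μ.restrict s) = atomsOf μ ∩ s := by
  ext f
  by_cases hf : f ∈ s <;> simp [atomsOf, hf]

lemma atomsOf_sum_smul_dirac (c : ℕ → ℕ) (φ : ℕ → α) :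
    atomsOf (Measure.sum fun n => (c n : ℝ≥0∞) • Measure.dirac (φ n)) = φ '' {n | c n ≠ 0} := by
  ext f
  simp [atomsOf, ENNReal.tsum_eq_zero]

lemma sum_smul_dirac_apply_eq_zero {c : ℕ → ℕ} {φ : ℕ → α} {s : Set α} (hs : MeasurableSet s)
    (h : Disjoint (atomsOf (Measure.sum fun n => (c n : ℝ≥0∞) • Measure.dirac (φ n))) s) :
    (Measure.sum fun n => (c n : ℝ≥0∞) • Measure.dirac (φ n)) s = 0 := by
  rw [atomsOf_sum_smul_dirac] at h
  rw [Measure.sum_apply _ hs, ENNReal.tsum_eq_zero]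
  intro n
  rcases eq_or_ne (c n) 0 with hc | hc
  · simp [hc]
  · simp [h.notMem_of_mem_left (mem_image_of_mem φ hc)]

end PointMeasure

lemma Real.sSup_mem_of_finite_inter_Ioi {s : Set ℝ} {a : ℝ} (hne : s.Nonempty) (hs : BddAbove s)
    (ha : a < sSup s) (hfin : (s ∩ Ioi a).Finite) : sSup s ∈ s := by
  obtain ⟨x, hx, hax⟩ := exists_lt_of_lt_csSup hne ha
  have hne' : (s ∩ Ioi a).Nonempty := ⟨x, hx, hax⟩
  have hsup : sSup s = sSup (s ∩ Ioi a) := by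
    refine le_antisymm (csSup_le hne fun y hy => ?_) (csSup_le_csSup hs hne' inter_subset_left)
    by_cases hy' : a < y
    · exact le_csSup hfin.bddAbove ⟨hy, hy'⟩
    · exact (not_lt.mp hy').trans (hax.le.trans (le_csSup hfin.bddAbove ⟨hx, hax⟩))
  rw [hsup]
  exact inter_subset_left (hne'.csSup_mem hfin)

lemma maxM_le {T : Type*} [TopologicalSpace T] [MeasurableSpace C(T, ℝ)]
    {M : Measure C(T, ℝ)} {t : T} {c : ℝ} (hc : 0 ≤ c) (h : ∀ f ∈ atomsOf M, f t ≤ c) :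
    maxM M t ≤ c :=
  Real.sSup_le (forall_mem_image.mpr h) hc

section Extremal

variable {T : Type*} [TopologicalSpace T]

def extremalSet (K : Set T) (η : T → ℝ) : Set C(T, ℝ) := {f | ∃ t ∈ K, η t ≤ f t}

lemma compl_extremalSet (K : Set T) (η : T → ℝ) :
    (extremalSet K η)ᶜ = {f | ∀ t ∈ K, f t < η t} := by
  ext f
  simp [extremalSet]

lemma isClosed_extremalSet [CompactSpace T] {K : Set T} (hK : IsClosed K) {η : T → ℝ}
    (hη : LowerSemicontinuous η) : IsClosed (extremalSet K η) := by
  have hproj : extremalSet K η = Prod.fst '' {p : C(T, ℝ) × T | p.2 ∈ K ∧ η p.2 ≤ p.1 p.2} := by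
    ext f
    simp [extremalSet]
  rw [hproj]
  refine isClosedMap_fst_of_compactSpace _ ((hK.preimage continuous_snd).inter ?_)
  exact hη.isClosed_epigraph.preimage (continuous_snd.prodMk continuous_eval)

end Extremal

section PointMeasureOnContinuousMaps

variable {T : Type*} [MetricSpace T] [CompactSpace T] [MeasurableSpace C(T, ℝ)]

namespace IsMp

variable {M : Measure C(T, ℝ)}

lemma restrict (hM : IsMp M) {s : Set C(T, ℝ)} (hs : MeasurableSet s) : IsMp (M.restrict s) := by
  classical
  obtain ⟨c, φ, rfl, hpos, hfin⟩ := hM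
  refine ⟨fun n => if φ n ∈ s then c n else 0, φ, ?_, fun n hn => hpos n ?_, fun ε hε => ?_⟩
  · rw [Measure.restrict_sum _ hs]
    congr 1
    ext1 n
    rw [Measure.restrict_smul, restrict_dirac' hs]
    by_cases h : φ n ∈ s <;> simp [h]
  · exact fun h => hn (by simp [h])
  · exact (hfin ε hε).subset fun n ⟨hn, hεn⟩ => ⟨fun h => hn (by simp [h]), hεn⟩

variable [BorelSpace C(T, ℝ)]

lemma nonneg (hM : IsMp M) {f : C(T, ℝ)} (hf : f ∈ atomsOf M) : 0 ≤ f := by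
  obtain ⟨c, φ, rfl, hpos, -⟩ := hM
  rw [atomsOf_sum_smul_dirac] at hf
  obtain ⟨n, hn, rfl⟩ := hf
  exact (hpos n hn).1

lemma finite_norm_gt (hM : IsMp M) {ε : ℝ} (hε : 0 < ε) :
    {f ∈ atomsOf M | ε < ‖f‖}.Finite := by
  obtain ⟨c, φ, rfl, -, hfin⟩ := hM
  refine ((hfin ε hε).image φ).subset ?_
  rintro f ⟨hf, hεf⟩
  rw [atomsOf_sum_smul_dirac] at hf
  obtain ⟨n, hn, rfl⟩ := hf
  exact ⟨n, ⟨hn, hεf⟩, rfl⟩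

lemma measure_eq_zero (hM : IsMp M) {s : Set C(T, ℝ)} (hs : MeasurableSet s)
    (h : Disjoint (atomsOf M) s) : M s = 0 := by
  obtain ⟨c, φ, rfl, -, -⟩ := hM
  exact sum_smul_dirac_apply_eq_zero hs h

end IsMp

variable [BorelSpace C(T, ℝ)] {M N : Measure C(T, ℝ)}

lemma bddAbove_image_apply_atomsOf (hM : IsMp M) (t : T) :
    BddAbove ((fun f : C(T, ℝ) => f t) '' atomsOf M) := by
  have hlarge := ((hM.finite_norm_gt one_pos).image fun f : C(T, ℝ) => f t).bddAbove
  refine (hlarge.union (bddAbove_Iic (a := 1))).mono ?_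
  rintro _ ⟨f, hf, rfl⟩
  by_cases h : 1 < ‖f‖
  · exact Or.inl ⟨f, ⟨hf, h⟩, rfl⟩
  · exact Or.inr ((Real.le_norm_self _).trans ((f.norm_coe_le_norm t).trans (not_lt.mp h)))

lemma le_maxM (hM : IsMp M) {f : C(T, ℝ)} (hf : f ∈ atomsOf M) (t : T) : f t ≤ maxM M t :=
  le_csSup (bddAbove_image_apply_atomsOf hM t) (mem_image_of_mem _ hf)

lemma maxM_nonneg (hM : IsMp M) (t : T) : 0 ≤ maxM M t :=
  Real.sSup_nonneg (forall_mem_image.mpr fun _ hf => hM.nonneg hf t)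

lemma maxM_mono (hN : IsMp N) (h : atomsOf M ⊆ atomsOf N) (t : T) : maxM M t ≤ maxM N t :=
  maxM_le (maxM_nonneg hN t) fun _ hf => le_maxM hN (h hf) t

lemma exists_maxM_le_apply (hM : IsMp M) (hne : (atomsOf M).Nonempty) (t : T) :
    ∃ f ∈ atomsOf M, maxM M t ≤ f t := by
  obtain ⟨f₀, hf₀⟩ := hne
  by_cases hpos : maxM M t ≤ 0
  · exact ⟨f₀, hf₀, hpos.trans (hM.nonneg hf₀ t)⟩
  have hfin : ((fun f : C(T, ℝ) => f t) '' atomsOf M ∩ Ioi (maxM M t / 2)).Finite := by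
    refine ((hM.finite_norm_gt (half_pos (not_le.mp hpos))).image fun f => f t).subset ?_
    rintro _ ⟨⟨f, hf, rfl⟩, hft⟩
    exact ⟨f, ⟨hf, hft.trans_le ((Real.le_norm_self _).trans (f.norm_coe_le_norm t))⟩, rfl⟩
  obtain ⟨f, hf, hft⟩ := Real.sSup_mem_of_finite_inter_Ioi ⟨_, mem_image_of_mem _ hf₀⟩
    (bddAbove_image_apply_atomsOf hM t) (half_lt_self (not_le.mp hpos)) hfin
  exact ⟨f, hf, hft.ge⟩

lemma lowerSemicontinuous_maxM (hM : IsMp M) : LowerSemicontinuous (maxM M) := by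
  have hsup : maxM M = fun t => ⨆ f : atomsOf M, (f : C(T, ℝ)) t := by
    ext t
    rw [maxM, image_eq_range]
    rfl
  rw [hsup]
  refine lowerSemicontinuous_ciSup (fun t => ?_) fun f => f.1.continuous.lowerSemicontinuous
  simpa only [image_eq_range] using bddAbove_image_apply_atomsOf hM t

lemma maxM_restrict_extremalSet (hM : IsMp M) {K : Set T}
    (hS : MeasurableSet (extremalSet K (maxM M))) {t : T} (ht : t ∈ K) :
    maxM (M.restrict (extremalSet K (maxM M))) t = maxM M t := by
  have hMS := hM.restrict hS
  refine le_antisymm (maxM_mono hM (by simp [atomsOf_restrict]) t)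
    (maxM_le (maxM_nonneg hMS t) fun f hf => ?_)
  obtain ⟨g, hg, hgt⟩ := exists_maxM_le_apply hM ⟨f, hf⟩ t
  calc f t ≤ maxM M t := le_maxM hM hf t
    _ ≤ g t := hgt
    _ ≤ maxM (M.restrict (extremalSet K (maxM M))) t :=
      le_maxM hMS (by rw [atomsOf_restrict]; exact ⟨hg, t, ht, hgt⟩) t

lemma maxM_add_eq (hMN : IsMp (M + N)) (hM : IsMp M) {t : T}
    (h : ∀ g ∈ atomsOf N, g t < maxM M t) : maxM (M + N) t = maxM M t := by
  refine le_antisymm (maxM_le (maxM_nonneg hM t) fun f hf => ?_)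
    (maxM_mono hMN (atomsOf_add M N ▸ subset_union_left) t)
  rcases (atomsOf_add M N ▸ hf : f ∈ atomsOf M ∪ atomsOf N) with hf | hf
  · exact le_maxM hM hf t
  · exact (h f hf).le

lemma restrict_extremalSet_add_eq (hMN : IsMp (M + N)) (hM : IsMp M) (hN : IsMp N) {K : Set T}
    (hS : MeasurableSet (extremalSet K (maxM (M + N))))
    (ha : ∀ f ∈ atomsOf M, ∃ t ∈ K, maxM M t ≤ f t)
    (hb : ∀ g ∈ atomsOf N, ∀ t ∈ K, g t < maxM M t) :
    (M + N).restrict (extremalSet K (maxM (M + N))) = M := by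
  have hmax : ∀ t ∈ K, maxM (M + N) t = maxM M t := fun t ht =>
    maxM_add_eq hMN hM fun g hg => hb g hg t ht
  have hM_compl : M (extremalSet K (maxM (M + N)))ᶜ = 0 := by
    refine hM.measure_eq_zero hS.compl (disjoint_left.mpr fun f hf hf' => hf' ?_)
    obtain ⟨t, ht, hft⟩ := ha f hf
    exact ⟨t, ht, (hmax t ht).trans_le hft⟩
  have hN_S : N (extremalSet K (maxM (M + N))) = 0 := by
    refine hN.measure_eq_zero hS (disjoint_left.mpr fun g hg ⟨t, ht, hgt⟩ => ?_)
    exact (hb g hg t ht).not_ge ((hmax t ht).symm.trans_le hgt)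
  rw [Measure.restrict_add, Measure.restrict_eq_zero.mpr hN_S, add_zero,
    Measure.restrict_eq_self_of_ae_mem (ae_iff.mpr hM_compl)]

end PointMeasureOnContinuousMaps

/-- for `Φ ∈ M_p(C_0)` and `K ⊆ T` closed, the `K`-extremal point measure
`Φ_K^+` (restriction of `Φ` to the set of `K`-extremal functions) is the unique
sub-point-measure `Φ̃` of `Φ` satisfying (a) every atom of `Φ̃` attains `max(Φ̃)` at some
point of `K`, and (b) every atom `g` of `Φ − Φ̃` satisfies `g <_K max(Φ̃)`. -/
theorem extremal_decomposition_unique {T : Type*} [MetricSpace T] [CompactSpace T]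
    [MeasurableSpace C(T, ℝ)] [BorelSpace C(T, ℝ)]
    (K : Set T) (hK : IsClosed K)
    (Φ : Measure C(T, ℝ)) (hΦ : IsMp Φ) :
    -- Φ_K^+ and Φ_K^-
    (let Φp := Φ.restrict {f : C(T, ℝ) | ∃ t ∈ K, maxM Φ t ≤ f t}
     let Φm := Φ.restrict {f : C(T, ℝ) | ∀ t ∈ K, f t < maxM Φ t}
     -- decomposition:
     Φ = Φp + Φm ∧
     -- (a) every atom of Φ_K^+ is extremal for max(Φ_K^+):
     (∀ f ∈ atomsOf Φp, ∃ t ∈ K, maxM Φp t ≤ f t) ∧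
     -- (b) every atom of Φ − Φ_K^+ = Φ_K^- lies strictly below max(Φ_K^+) on K:
     (∀ g ∈ atomsOf Φm, ∀ t ∈ K, g t < maxM Φp t)) ∧
    -- uniqueness among sub-point-measures of Φ:
    (∀ Φt Ψ : Measure C(T, ℝ), IsMp Φt → IsMp Ψ → Φ = Φt + Ψ →
      (∀ f ∈ atomsOf Φt, ∃ t ∈ K, maxM Φt t ≤ f t) →
      (∀ g ∈ atomsOf Ψ, ∀ t ∈ K, g t < maxM Φt t) →
      Φt = Φ.restrict {f : C(T, ℝ) | ∃ t ∈ K, maxM Φ t ≤ f t}) := by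
  have hS : MeasurableSet (extremalSet K (maxM Φ)) :=
    (isClosed_extremalSet hK (lowerSemicontinuous_maxM hΦ)).measurableSet
  have hmax : ∀ t ∈ K, maxM (Φ.restrict (extremalSet K (maxM Φ))) t = maxM Φ t :=
    fun t ht => maxM_restrict_extremalSet hΦ hS ht
  refine ⟨⟨?_, fun f hf => ?_, fun g hg t ht => ?_⟩, fun Φt Ψ hΦt hΨ hsum ha hb => ?_⟩
  · rw [← compl_extremalSet]
    exact (Φ.restrict_add_restrict_compl hS).symm
  · rw [atomsOf_restrict] at hf
    obtain ⟨-, t, ht, hft⟩ := hf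
    exact ⟨t, ht, (hmax t ht).trans_le hft⟩
  · rw [← compl_extremalSet, atomsOf_restrict] at hg
    exact (not_le.mp fun hgt => hg.2 ⟨t, ht, hgt⟩).trans_le (hmax t ht).ge
  · subst hsum
    exact (restrict_extremalSet_add_eq hΦ hΦt hΨ hS ha hb).symm
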